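/- arXiv:2005.02280 — 2 statements merged into one kernel-verified Lean document; each statement's English description precedes it below -/
import Mathlib

section
/- Any least squares rating vector q (a vector with Σ_i q_i = 0 and L·q = s) is a global minimizer over ℝⁿ of the quadratic objective F(x) = xᵀ L x − 2 sᵀ x; i.e., F(q) ≤ F(x) for all x ∈ ℝⁿ. (This is the least squared errors characterization of the least squares method.) -/
/-!
Completing the square: for symmetric `L` with `L q = s`,
`F x = F q + (x - q)ᵀ L (x - q)`, and the Laplacian is positive semidefinite because
`2 vᵀ L v = ∑ i, ∑ k, M i k * (v i - v k) ^ 2`.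
-/

open Matrix Finset

/-- The Laplacian matrix of the matches matrix `M`:
`L i j = -M i j` for `i ≠ j` and `L i i = ∑_{j ≠ i} M i j`. -/
def lap {n : ℕ} (M : Matrix (Fin n) (Fin n) ℝ) : Matrix (Fin n) (Fin n) ℝ :=
  Matrix.of fun i j => if i = j then ∑ k ∈ Finset.univ.erase i, M i k else -M i j

namespace Matrix

variable {ι R : Type*} [Fintype ι] [CommRing R]

theorem dotProduct_mulVec_sub_two_mul_dotProduct_eq {A : Matrix ι ι R} (hA : A.IsSymm)
    (q x : ι → R) :
    x ⬝ᵥ (A *ᵥ x) - 2 * ((A *ᵥ q) ⬝ᵥ x) =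
      (x - q) ⬝ᵥ (A *ᵥ (x - q)) + (q ⬝ᵥ (A *ᵥ q) - 2 * ((A *ᵥ q) ⬝ᵥ q)) := by
  have hcross : x ⬝ᵥ (A *ᵥ q) = q ⬝ᵥ (A *ᵥ x) := by
    rw [dotProduct_mulVec, ← mulVec_transpose, hA.eq, dotProduct_comm]
  simp only [mulVec_sub, dotProduct_sub, sub_dotProduct, dotProduct_comm (A *ᵥ q)]
  rw [hcross]
  ring

theorem PosSemidef.dotProduct_mulVec_sub_two_mul_dotProduct_le [PartialOrder R] [StarRing R]
    [TrivialStar R] [IsOrderedRing R] {A : Matrix ι ι R} (hA : A.PosSemidef) (q x : ι → R) :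
    q ⬝ᵥ (A *ᵥ q) - 2 * ((A *ᵥ q) ⬝ᵥ q) ≤ x ⬝ᵥ (A *ᵥ x) - 2 * ((A *ᵥ q) ⬝ᵥ x) := by
  have hsymm : A.IsSymm := by
    simpa [IsHermitian, conjTranspose, IsSymm] using hA.isHermitian
  have := hA.dotProduct_mulVec_nonneg (x - q)
  rw [star_trivial] at this
  rw [dotProduct_mulVec_sub_two_mul_dotProduct_eq hsymm q x]
  exact le_add_of_nonneg_left this

end Matrix

section Laplacian

variable {n : ℕ} {M : Matrix (Fin n) (Fin n) ℝ}

theorem lap_mulVec_apply (v : Fin n → ℝ) (i : Fin n) :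
    (lap M *ᵥ v) i = ∑ k, M i k * (v i - v k) := by
  rw [mulVec, dotProduct, ← add_sum_erase _ _ (mem_univ i),
    ← add_sum_erase _ (fun k => M i k * (v i - v k)) (mem_univ i)]
  simp only [lap, of_apply, if_true, sub_self, mul_zero, zero_add, sum_mul]
  rw [← sum_add_distrib]
  refine sum_congr rfl fun j hj => ?_
  rw [if_neg (ne_of_mem_erase hj).symm]
  ring

theorem lap_isSymm (hM : M.IsSymm) : (lap M).IsSymm := by
  ext i j
  rcases eq_or_ne i j with rfl | h
  · rfl
  · simp [lap, h, h.symm, hM.apply i j]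

theorem two_mul_dotProduct_lap_mulVec (hM : M.IsSymm) (v : Fin n → ℝ) :
    2 * (v ⬝ᵥ (lap M *ᵥ v)) = ∑ i, ∑ k, M i k * (v i - v k) ^ 2 := by
  have hswap : ∑ i, ∑ k, M i k * (v i - v k) * v k = -∑ i, ∑ k, M i k * (v i - v k) * v i := by
    rw [sum_comm, ← sum_neg_distrib]
    refine sum_congr rfl fun k _ => ?_
    rw [← sum_neg_distrib]
    refine sum_congr rfl fun i _ => ?_
    rw [hM.apply k i]
    ring
  have hsplit : ∑ i, ∑ k, M i k * (v i - v k) ^ 2 =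
      ∑ i, ∑ k, M i k * (v i - v k) * v i - ∑ i, ∑ k, M i k * (v i - v k) * v k := by
    simp only [← sum_sub_distrib]
    refine sum_congr rfl fun i _ => sum_congr rfl fun k _ => ?_
    ring
  rw [hsplit, hswap, sub_neg_eq_add, ← two_mul]
  simp only [dotProduct, lap_mulVec_apply, mul_sum]
  refine sum_congr rfl fun i _ => sum_congr rfl fun k _ => ?_
  ring

theorem lap_posSemidef (hM : M.IsSymm) (hM₀ : ∀ i j, 0 ≤ M i j) : (lap M).PosSemidef := by
  refine .of_dotProduct_mulVec_nonneg (lap_isSymm hM) fun v => ?_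
  suffices 0 ≤ 2 * (v ⬝ᵥ (lap M *ᵥ v)) by rw [star_trivial]; linarith
  rw [two_mul_dotProduct_lap_mulVec hM]
  exact sum_nonneg fun i _ => sum_nonneg fun k _ => mul_nonneg (hM₀ i k) (sq_nonneg _)

end Laplacian

theorem least_squares_minimizes_general
    (n : ℕ) (M : Matrix (Fin n) (Fin n) ℝ)
    (hsymm : M.IsSymm) (hnonneg : ∀ i j, 0 ≤ M i j)
    (s : Fin n → ℝ)
    (q : Fin n → ℝ) (hq : lap M *ᵥ q = s) :
    ∀ x : Fin n → ℝ,
      q ⬝ᵥ (lap M *ᵥ q) - 2 * (s ⬝ᵥ q) ≤ x ⬝ᵥ (lap M *ᵥ x) - 2 * (s ⬝ᵥ x) := by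
  subst hq
  exact (lap_posSemidef hsymm hnonneg).dotProduct_mulVec_sub_two_mul_dotProduct_le q

/-- Any least squares rating vector `q` (with `∑ q = 0` and `L q = s`) is a global
minimizer of `F(x) = xᵀ L x - 2 sᵀ x`. -/
theorem least_squares_minimizes
    (n : ℕ) (hn : 1 ≤ n) (M : Matrix (Fin n) (Fin n) ℝ)
    (hsymm : M.IsSymm) (hnonneg : ∀ i j, 0 ≤ M i j) (hdiag : ∀ i, M i i = 0)
    (s : Fin n → ℝ) (hs : ∑ i, s i = 0)
    (q : Fin n → ℝ) (hq0 : ∑ i, q i = 0) (hq : lap M *ᵥ q = s) :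
    ∀ x : Fin n → ℝ,
      q ⬝ᵥ (lap M *ᵥ q) - 2 * (s ⬝ᵥ q) ≤ x ⬝ᵥ (lap M *ᵥ x) - 2 * (s ⬝ᵥ x) :=
  least_squares_minimizes_general n M hsymm hnonneg s q hq
end

section
/- The ranking induced by the generalized row sum converges to the least squares ranking as ε → ∞: if the match graph is connected, Σ_i s_i = 0, and q_i > q_j for two teams i and j (where q is the least squares rating vector), then there exists ε₀ > 0 such that x_i(ε) > x_j(ε) for all ε > ε₀. -/
open Matrix Finset

lemma lap_mulVec {n : ℕ} (M : Matrix (Fin n) (Fin n) ℝ) (w : Fin n → ℝ) (i : Fin n) :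
    (lap M *ᵥ w) i = ∑ k, M i k * (w i - w k) := by
  simp only [mulVec, dotProduct, lap, Matrix.of_apply]
  rw [← Finset.sum_erase_add _ _ (Finset.mem_univ i),
      ← Finset.sum_erase_add _ _ (Finset.mem_univ i)]
  simp only [if_pos rfl, if_true, sub_self, mul_zero, add_zero]
  rw [Finset.sum_mul, ← Finset.sum_add_distrib]
  apply Finset.sum_congr rfl
  intro k hk
  rw [if_neg (Finset.ne_of_mem_erase hk).symm]
  ring

lemma lap_sum_mulVec {n : ℕ} (M : Matrix (Fin n) (Fin n) ℝ) (hsymm : M.IsSymm)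
    (w : Fin n → ℝ) : ∑ i, (lap M *ᵥ w) i = 0 := by
  simp only [lap_mulVec]
  have h1 : ∑ i, ∑ k, M i k * (w i - w k) = ∑ i, ∑ k, M k i * (w k - w i) :=
    Finset.sum_comm
  have h2 : ∀ a b : Fin n, M a b = M b a := fun a b => (congrFun (congrFun hsymm.symm b) a).symm
  have : (2:ℝ) * ∑ i, ∑ k, M i k * (w i - w k) = 0 := by
    rw [two_mul]
    nth_rewrite 2 [h1]
    rw [← Finset.sum_add_distrib]
    apply Finset.sum_eq_zero; intro a _
    rw [← Finset.sum_add_distrib]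
    apply Finset.sum_eq_zero; intro b _
    rw [h2 a b]; ring
  linarith

lemma lap_qform {n : ℕ} (M : Matrix (Fin n) (Fin n) ℝ) (hsymm : M.IsSymm)
    (w : Fin n → ℝ) :
    (2:ℝ) * ∑ i, w i * (lap M *ᵥ w) i = ∑ i, ∑ k, M i k * (w i - w k)^2 := by
  have h2 : ∀ a b : Fin n, M a b = M b a := fun a b => (congrFun (congrFun hsymm.symm b) a).symm
  simp only [lap_mulVec]
  have hms : ∀ i : Fin n, w i * ∑ k, M i k * (w i - w k) = ∑ k, w i * (M i k * (w i - w k)) :=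
    fun i => Finset.mul_sum _ _ _
  simp only [hms]
  have h1 : ∑ i, ∑ k, w i * (M i k * (w i - w k)) = ∑ i, ∑ k, w k * (M k i * (w k - w i)) :=
    Finset.sum_comm
  rw [two_mul]
  nth_rewrite 2 [h1]
  rw [← Finset.sum_add_distrib]
  apply Finset.sum_congr rfl; intro a _
  rw [← Finset.sum_add_distrib]
  apply Finset.sum_congr rfl; intro b _
  rw [h2 a b]; ring

lemma qform_pos {n : ℕ} (hn : 1 ≤ n) (M : Matrix (Fin n) (Fin n) ℝ)
    (hnonneg : ∀ i j, 0 ≤ M i j)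
    (hconn : ∀ i j : Fin n, Relation.ReflTransGen (fun a b => 0 < M a b) i j)
    (w : Fin n → ℝ) (hw0 : ∑ k, w k = 0) (hwne : w ≠ 0) :
    0 < ∑ a, ∑ b, M a b * (w a - w b)^2 := by
  have hterm_nn : ∀ a b : Fin n, 0 ≤ M a b * (w a - w b)^2 :=
    fun a b => mul_nonneg (hnonneg a b) (sq_nonneg _)
  have hQnn : 0 ≤ ∑ a, ∑ b, M a b * (w a - w b)^2 :=
    Finset.sum_nonneg fun a _ => Finset.sum_nonneg fun b _ => hterm_nn a b
  rcases hQnn.lt_or_eq with h | h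
  · exact h
  exfalso
  have hz : ∀ a ∈ (univ : Finset (Fin n)), ∑ b, M a b * (w a - w b)^2 = 0 :=
    (Finset.sum_eq_zero_iff_of_nonneg (fun a _ =>
      Finset.sum_nonneg fun b _ => hterm_nn a b)).mp h.symm
  have hz2 : ∀ a b : Fin n, M a b * (w a - w b)^2 = 0 := by
    intro a b
    exact (Finset.sum_eq_zero_iff_of_nonneg (fun b _ => hterm_nn a b)).mp
      (hz a (mem_univ a)) b (mem_univ b)
  have hedge : ∀ a b : Fin n, 0 < M a b → w a = w b := by
    intro a b hM
    have := hz2 a b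
    have h2 : (w a - w b)^2 = 0 := by
      rcases mul_eq_zero.mp this with h' | h'
      · exact absurd h' hM.ne'
      · exact h'
    have := pow_eq_zero_iff (n := 2) (by norm_num) |>.mp h2
    linarith
  have hconst : ∀ a b : Fin n, w a = w b := by
    intro a b
    induction hconn a b with
    | refl => rfl
    | tail _ hM ih => exact ih.trans (hedge _ _ hM)
  apply hwne
  funext a
  have hsum : ∑ k : Fin n, w k = (n : ℝ) * w a := by
    rw [Finset.sum_congr rfl fun k _ => hconst k a]
    simp [Finset.card_univ, mul_comm]
  have hn0 : (n : ℝ) ≠ 0 := by positivity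
  have := hw0
  rw [hsum] at this
  simpa [hn0] using this

lemma gap {n : ℕ} (hn : 1 ≤ n) (M : Matrix (Fin n) (Fin n) ℝ)
    (hnonneg : ∀ i j, 0 ≤ M i j)
    (hconn : ∀ i j : Fin n, Relation.ReflTransGen (fun a b => 0 < M a b) i j)
    (i j : Fin n) (hne : i ≠ j) :
    ∃ lam : ℝ, 0 < lam ∧ ∀ w : Fin n → ℝ, ∑ k, w k = 0 →
      lam * ∑ k, (w k)^2 ≤ ∑ a, ∑ b, M a b * (w a - w b)^2 := by
  set Q : (Fin n → ℝ) → ℝ := fun w => ∑ a, ∑ b, M a b * (w a - w b)^2 with hQ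
  have hQcont : Continuous Q :=
    continuous_finset_sum _ fun a _ => continuous_finset_sum _ fun b _ =>
      continuous_const.mul (((continuous_apply a).sub (continuous_apply b)).pow 2)
  set K : Set (Fin n → ℝ) := {w | ∑ k, w k = 0 ∧ ∑ k, (w k)^2 = 1} with hK
  have hKcl : IsClosed K := by
    have h1 : IsClosed {w : Fin n → ℝ | ∑ k, w k = 0} :=
      isClosed_eq (continuous_finset_sum _ fun k _ => continuous_apply k) continuous_const
    have h2 : IsClosed {w : Fin n → ℝ | ∑ k, (w k)^2 = 1} :=
      isClosed_eq (continuous_finset_sum _ fun k _ => (continuous_apply k).pow 2)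
        continuous_const
    exact h1.inter h2
  have hKbd : Bornology.IsBounded K := by
    apply (Metric.isBounded_closedBall (x := (0 : Fin n → ℝ)) (r := 1)).subset
    intro w hw
    rw [Metric.mem_closedBall, dist_zero_right]
    rw [pi_norm_le_iff_of_nonneg zero_le_one]
    intro a
    have h1 : (w a)^2 ≤ 1 := by
      rw [← hw.2]
      exact Finset.single_le_sum (fun k _ => sq_nonneg (w k)) (mem_univ a)
    rw [Real.norm_eq_abs]
    nlinarith [abs_nonneg (w a), sq_abs (w a)]
  have hKcompact : IsCompact K := Metric.isCompact_iff_isClosed_bounded.mpr ⟨hKcl, hKbd⟩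
  -- nonempty
  set r : ℝ := Real.sqrt (1/2) with hr
  have hr2 : r^2 = 1/2 := Real.sq_sqrt (by norm_num)
  set w0 : Fin n → ℝ := fun k => (if k = i then r else 0) + (if k = j then -r else 0) with hw0
  have hw0K : w0 ∈ K := by
    constructor
    · simp [hw0, Finset.sum_add_distrib, Finset.sum_ite_eq']
    · have : ∀ k, (w0 k)^2 = (if k = i then r^2 else 0) + (if k = j then r^2 else 0) := by
        intro k
        by_cases hki : k = i <;> by_cases hkj : k = j <;>
          simp_all [hw0] <;> ring
      simp only [this]
      rw [Finset.sum_add_distrib]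
      simp [Finset.sum_ite_eq', hr2]
      norm_num
  obtain ⟨wm, hwmK, hmin⟩ := hKcompact.exists_isMinOn ⟨w0, hw0K⟩ hQcont.continuousOn
  have hminle : ∀ w ∈ K, Q wm ≤ Q w := fun w hw => hmin hw
  have hwmne : wm ≠ 0 := by
    intro h
    have := hwmK.2
    rw [h] at this
    simp at this
  have hlam : 0 < Q wm := qform_pos hn M hnonneg hconn wm hwmK.1 hwmne
  refine ⟨Q wm, hlam, ?_⟩
  intro w hw0sum
  have htnn : 0 ≤ ∑ k, (w k)^2 := Finset.sum_nonneg fun k _ => sq_nonneg _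
  rcases htnn.lt_or_eq with ht | ht
  · -- t > 0
    set t : ℝ := ∑ k, (w k)^2 with hts
    set rr : ℝ := Real.sqrt t with hrr
    have hrrpos : 0 < rr := Real.sqrt_pos.mpr ht
    have hrr2 : rr^2 = t := Real.sq_sqrt ht.le
    set u : Fin n → ℝ := fun k => w k / rr with hu
    have huK : u ∈ K := by
      constructor
      · simp [hu, ← Finset.sum_div, hw0sum]
      · have : ∀ k, (u k)^2 = (w k)^2 / t := by
          intro k
          rw [hu]
          simp only
          rw [div_pow, hrr2]
        simp only [this]
        rw [← Finset.sum_div, ← hts, div_self ht.ne']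
    have hQu : Q u = Q w / t := by
      rw [hQ]
      simp only
      rw [Finset.sum_div]
      apply Finset.sum_congr rfl; intro a _
      rw [Finset.sum_div]
      apply Finset.sum_congr rfl; intro b _
      rw [hu]
      simp only
      rw [div_sub_div_same, div_pow, hrr2]
      ring
    have := hminle u huK
    rw [hQu, le_div_iff₀ ht] at this
    linarith
  · rw [← ht, mul_zero]
    exact Finset.sum_nonneg fun a _ => Finset.sum_nonneg fun b _ =>
      mul_nonneg (hnonneg a b) (sq_nonneg _)

set_option maxHeartbeats 2000000 in
/-- The ranking induced by the generalized row sum converges to the least squares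
ranking as `ε → ∞`: if `q i > q j`, then there exists `ε₀ > 0` such that
`x ε i > x ε j` for all `ε > ε₀`. -/
theorem grs_ranking_tendsto_least_squares_ranking
    (n : ℕ) (hn : 1 ≤ n) (M : Matrix (Fin n) (Fin n) ℝ)
    (hsymm : M.IsSymm) (hnonneg : ∀ i j, 0 ≤ M i j) (hdiag : ∀ i, M i i = 0)
    (hconn : ∀ i j : Fin n, Relation.ReflTransGen (fun a b => 0 < M a b) i j)
    (s : Fin n → ℝ) (hs : ∑ i, s i = 0)
    (x : ℝ → (Fin n → ℝ))
    (hx : ∀ ε : ℝ, 0 < ε → (1 + ε • lap M) *ᵥ x ε = s)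
    (q : Fin n → ℝ) (hq0 : ∑ i, q i = 0) (hq : lap M *ᵥ q = s)
    (i j : Fin n) (hij : q i > q j) :
    ∃ ε₀ : ℝ, 0 < ε₀ ∧ ∀ ε : ℝ, ε > ε₀ → x ε i > x ε j := by
  have hne : i ≠ j := by rintro rfl; exact lt_irrefl _ hij
  obtain ⟨lam, hlampos, hgap⟩ := gap hn M hnonneg hconn i j hne
  set δ : ℝ := q i - q j with hδ
  have hδpos : 0 < δ := sub_pos.mpr hij
  set Cq : ℝ := ∑ k, (q k)^2 with hCq
  have hCqnn : 0 ≤ Cq := Finset.sum_nonneg fun k _ => sq_nonneg _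
  set mu : ℝ := lam / 2 with hmu
  have hmupos : 0 < mu := div_pos hlampos two_pos
  have hmd : 0 < mu * δ := mul_pos hmupos hδpos
  have hdivnn : 0 ≤ Real.sqrt (2 * Cq) / (mu * δ) :=
    div_nonneg (Real.sqrt_nonneg _) hmd.le
  refine ⟨1 + Real.sqrt (2 * Cq) / (mu * δ), by linarith, ?_⟩
  intro ε hε
  have hεpos : 0 < ε := by linarith
  -- pointwise form of the defining equation
  have hxε := hx ε hεpos
  have hxε' : ∀ k, x ε k + ε * (lap M *ᵥ x ε) k = s k := by
    intro k
    have := congrFun hxε k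
    rw [Matrix.add_mulVec, Matrix.one_mulVec, Matrix.smul_mulVec] at this
    simpa using this
  -- sum of x ε is zero
  have hxsum : ∑ k, x ε k = 0 := by
    have h1 : ∑ k, (x ε k + ε * (lap M *ᵥ x ε) k) = ∑ k, s k :=
      Finset.sum_congr rfl fun k _ => hxε' k
    rw [Finset.sum_add_distrib, ← Finset.mul_sum, lap_sum_mulVec M hsymm, hs] at h1
    linarith
  -- the error vector
  set w : Fin n → ℝ := fun k => ε * x ε k - q k with hw
  have hwsum : ∑ k, w k = 0 := by
    simp only [hw, Finset.sum_sub_distrib, ← Finset.mul_sum, hxsum, hq0]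
    ring
  have hweq : ∀ k, w k + ε * (lap M *ᵥ w) k = - q k := by
    intro k
    have hLw : (lap M *ᵥ w) k = ε * (lap M *ᵥ x ε) k - (lap M *ᵥ q) k := by
      have : w = ε • x ε - q := by funext a; simp [hw]
      rw [this, Matrix.mulVec_sub, Matrix.mulVec_smul]
      simp
    have hqk : (lap M *ᵥ q) k = s k := congrFun hq k
    rw [hLw, hqk, hw]
    simp only
    have := hxε' k
    nlinarith [hxε' k]
  -- dot with w
  have hdot : ∑ k, (w k)^2 + ε * ∑ k, w k * (lap M *ᵥ w) k = - ∑ k, q k * w k := by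
    have h1 : ∀ k, w k * (w k + ε * (lap M *ᵥ w) k) = w k * (- q k) :=
      fun k => by rw [hweq k]
    have h2 : ∑ k, w k * (w k + ε * (lap M *ᵥ w) k) = ∑ k, w k * (- q k) :=
      Finset.sum_congr rfl fun k _ => h1 k
    have h3 : ∑ k, w k * (w k + ε * (lap M *ᵥ w) k)
        = ∑ k, (w k)^2 + ε * ∑ k, w k * (lap M *ᵥ w) k := by
      rw [Finset.mul_sum, ← Finset.sum_add_distrib]
      apply Finset.sum_congr rfl; intro k _; ring
    have h4 : ∑ k, w k * (- q k) = - ∑ k, q k * w k := by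
      rw [← Finset.sum_neg_distrib]
      apply Finset.sum_congr rfl; intro k _; ring
    rw [← h3, h2, h4]
  set T : ℝ := ∑ k, (w k)^2 with hT
  have hTnn : 0 ≤ T := Finset.sum_nonneg fun k _ => sq_nonneg _
  -- gap bound
  have hQw : lam * T ≤ 2 * ∑ k, w k * (lap M *ᵥ w) k := by
    rw [lap_qform M hsymm w]
    exact hgap w hwsum
  have hkey : ε * mu * T ≤ - ∑ k, q k * w k := by
    have : mu * T ≤ ∑ k, w k * (lap M *ᵥ w) k := by
      rw [hmu]; linarith
    nlinarith [hdot]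
  -- Cauchy-Schwarz
  have hCS : (∑ k, q k * w k)^2 ≤ Cq * T :=
    Finset.sum_mul_sq_le_sq_mul_sq _ _ _
  have hTbound : (ε * mu)^2 * T^2 ≤ Cq * T := by
    have h0 : 0 ≤ ε * mu * T := mul_nonneg (mul_nonneg hεpos.le hmupos.le) hTnn
    nlinarith [hkey, hCS]
  have hTle : (ε * mu)^2 * T ≤ Cq := by
    rcases hTnn.lt_or_eq with hT0 | hT0
    · have := hTbound
      nlinarith
    · rw [← hT0]; simpa using hCqnn
  -- from ε > ε₀ : (ε * mu * δ)^2 > 2 * Cq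
  have hεbig : Real.sqrt (2 * Cq) < ε * mu * δ - mu * δ := by
    have hmd := hmd
    have h1 : Real.sqrt (2 * Cq) / (mu * δ) < ε - 1 := by linarith
    have h2 : 0 < mu * δ := hmd
    calc Real.sqrt (2 * Cq) = Real.sqrt (2 * Cq) / (mu * δ) * (mu * δ) := by
          field_simp
      _ < (ε - 1) * (mu * δ) := by exact mul_lt_mul_of_pos_right h1 h2
      _ = ε * mu * δ - mu * δ := by ring
  have hsq : 2 * Cq < (ε * mu * δ)^2 := by
    have h2 : 0 < mu * δ := hmd
    have h3 : Real.sqrt (2 * Cq) < ε * mu * δ := by linarith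
    have h4 : 0 ≤ Real.sqrt (2 * Cq) := Real.sqrt_nonneg _
    have h5 : Real.sqrt (2 * Cq) * Real.sqrt (2 * Cq) < (ε * mu * δ) * (ε * mu * δ) :=
      mul_self_lt_mul_self h4 h3
    rw [Real.mul_self_sqrt (by linarith : (0:ℝ) ≤ 2 * Cq)] at h5
    rw [pow_two]
    linarith
  -- (w i - w j)^2 ≤ 2 T
  have hwij : (w i - w j)^2 ≤ 2 * T := by
    have hi : (w i)^2 + (w j)^2 ≤ T := by
      rw [hT]
      have := Finset.sum_le_sum_of_subset_of_nonneg
        (f := fun k => (w k)^2)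
        (s := ({i, j} : Finset (Fin n))) (Finset.subset_univ _)
        (fun k _ _ => sq_nonneg (w k))
      rwa [Finset.sum_pair hne] at this
    nlinarith [sq_nonneg (w i + w j)]
  -- conclude |w i - w j| < δ
  have hfinal : (w i - w j)^2 < δ^2 := by
    have hεmu2 : 0 < (ε * mu)^2 := pow_pos (mul_pos hεpos hmupos) 2
    -- (ε mu)^2 (w i - w j)^2 ≤ 2 (ε mu)^2 T ≤ 2 Cq < (ε mu δ)^2
    nlinarith [hTle, hwij, hsq]
  have habs : w i - w j > -δ := by nlinarith [hfinal]
  -- ε (x ε i - x ε j) = δ + (w i - w j) > 0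
  have hd : 0 < ε * (x ε i - x ε j) := by
    have : ε * (x ε i - x ε j) = δ + (w i - w j) := by rw [hw, hδ]; ring
    rw [this]; linarith
  by_contra hcon
  push_neg at hcon
  have : ε * (x ε i - x ε j) ≤ 0 :=
    mul_nonpos_of_nonneg_of_nonpos hεpos.le (by linarith)
  linarith
end
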